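/- Let P_n(x) be the D'Arcais polynomials. For all positive integers a, b with a + b ≥ 5, P_a(2) · P_b(2) > P_{a+b}(2). -/

import Mathlib

/-- Sum of divisors function. -/
def mysigma (n : ℕ) : ℕ := ∑ d ∈ n.divisors, d

/-- Partition function: number of partitions of `n`. -/
def partcount (n : ℕ) : ℕ := Fintype.card (Nat.Partition n)

/-- D'Arcais polynomials as real functions. -/
noncomputable def P : ℕ → ℝ → ℝ
  | 0 => fun _ => 1
  | n + 1 => fun x => x / (n + 1) * ∑ k ∈ Finset.range (n + 1), (mysigma (k + 1) : ℝ) * P (n - k) x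

/-- Number of k-colored partitions of n (each part in one of k colors),
counted via splitting into one ordinary partition per color. -/
def pcolored : ℕ → ℕ → ℕ
  | 0, n => if n = 0 then 1 else 0
  | k + 1, n => ∑ j ∈ Finset.range (n + 1), pcolored k j * partcount (n - j)

/-!
Write `q n = P n 2`. The recursion `n q(n) = 2 ∑ σ(k) q(n - k)` gives, by strong induction,
`q(u + v) ≤ 4/5 q(u) q(v)` for `u, v ≥ 2` and `q(u + 1) ≤ 19/10 q(u)` for `u ≥ 4`. In the recursion
for `q(u + v)`, the terms with `n - k = (u - 1 - k) + v` large are bounded by the induction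
hypothesis, after which they reassemble into the recursion for `q(u)`; the few remaining terms are
at most `n²` times small values of `q`, and are absorbed using `q(u) ≥ 50 u²` for `u ≥ 20`.
Below `u = 20` everything is checked on the values of `q(n)` for `n < 40`, which are verified
against the recursion.
-/

open Finset

lemma le_mysigma (k : ℕ) : k ≤ mysigma k := by
  rcases k.eq_zero_or_pos with rfl | hk
  · exact Nat.zero_le _
  · exact single_le_sum (fun d _ => d.zero_le) (Nat.mem_divisors_self k hk.ne')

lemma mysigma_le_sq (k : ℕ) : mysigma k ≤ k ^ 2 :=
  calc mysigma k ≤ #k.divisors * k := sum_le_card_nsmul _ _ _ fun _ => Nat.divisor_le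
    _ ≤ k * k := Nat.mul_le_mul_right k (Nat.card_divisors_le_self k)
    _ = k ^ 2 := (sq k).symm

lemma sum_Ico_mysigma_mul_le {f : ℕ → ℝ} (hf : ∀ j, 0 ≤ f j) {c n : ℕ} (hcn : c ≤ n) :
    ∑ k ∈ Ico c n, (mysigma (k + 1) : ℝ) * f (n - 1 - k) ≤ n ^ 2 * ∑ j ∈ range (n - c), f j := by
  calc ∑ k ∈ Ico c n, (mysigma (k + 1) : ℝ) * f (n - 1 - k)
      ≤ ∑ k ∈ Ico c n, (n : ℝ) ^ 2 * f (n - 1 - k) := by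
        gcongr with k hk
        · exact hf _
        · have : k + 1 ≤ n := (mem_Ico.1 hk).2
          exact_mod_cast (mysigma_le_sq _).trans (Nat.pow_le_pow_left this 2)
    _ = n ^ 2 * ∑ j ∈ range (n - c), f j := by
        rw [← mul_sum, sum_Ico_eq_sum_range, ← sum_range_reflect]
        congr 1
        refine sum_congr rfl fun i hi => ?_
        rw [mem_range] at hi
        congr 1
        omega

lemma sum_range_mysigma_mul_le {f g : ℕ → ℝ} (hg : ∀ j, 0 ≤ g j) {C : ℝ} (hC : 0 ≤ C)
    {c n u : ℕ} (hcu : c ≤ u) (h : ∀ k < c, f (n - 1 - k) ≤ C * g (u - 1 - k)) :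
    ∑ k ∈ range c, (mysigma (k + 1) : ℝ) * f (n - 1 - k)
      ≤ C * ∑ k ∈ range u, (mysigma (k + 1) : ℝ) * g (u - 1 - k) := by
  calc ∑ k ∈ range c, (mysigma (k + 1) : ℝ) * f (n - 1 - k)
      ≤ ∑ k ∈ range c, C * ((mysigma (k + 1) : ℝ) * g (u - 1 - k)) := by
        refine sum_le_sum fun k hk => ?_
        rw [mul_left_comm]
        exact mul_le_mul_of_nonneg_left (h k (mem_range.1 hk)) (Nat.cast_nonneg _)
    _ ≤ C * ∑ k ∈ range u, (mysigma (k + 1) : ℝ) * g (u - 1 - k) := by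
        rw [← mul_sum]
        exact mul_le_mul_of_nonneg_left (sum_le_sum_of_subset_of_nonneg (range_subset_range.2 hcu)
          fun k _ _ => mul_nonneg (Nat.cast_nonneg _) (hg _)) hC

section Recursion

lemma natCast_mul_P (n : ℕ) (x : ℝ) :
    n * P n x = x * ∑ k ∈ range n, (mysigma (k + 1) : ℝ) * P (n - 1 - k) x := by
  cases n with
  | zero => simp
  | succ m =>
    simp only [P, Nat.add_sub_cancel]
    push_cast
    field_simp

variable {x : ℝ}

lemma P_pos (hx : 0 < x) (n : ℕ) : 0 < P n x := by
  induction n using Nat.strong_induction_on with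
  | _ n ih =>
    cases n with
    | zero => simp [P]
    | succ m =>
      simp only [P]
      refine mul_pos (by positivity) (sum_pos (fun k hk => ?_) ⟨0, by simp⟩)
      have hσ : (0 : ℝ) < mysigma (k + 1) := by exact_mod_cast k.succ_pos.trans_le (le_mysigma _)
      exact mul_pos hσ (ih _ (by omega))

lemma mul_sum_range_P_le (hx : 0 < x) (n : ℕ) : x * ∑ j ∈ range n, P j x ≤ n * P n x := by
  rw [natCast_mul_P, ← sum_range_reflect]
  gcongr with k hk
  have hσ : (1 : ℝ) ≤ mysigma (k + 1) := by exact_mod_cast (le_mysigma (k + 1)).trans' k.succ_pos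
  exact le_mul_of_one_le_left (P_pos hx _).le hσ

lemma natCast_mul_P_le (hx : 0 < x) {C : ℝ} (hC : 0 ≤ C) {c n u : ℕ} (hcu : c ≤ u)
    (hcn : c ≤ n) (h : ∀ k < c, P (n - 1 - k) x ≤ C * P (u - 1 - k) x) :
    n * P n x ≤ C * (u * P u x) + x * n ^ 2 * ∑ j ∈ range (n - c), P j x := by
  have hP : ∀ j, 0 ≤ P j x := fun j => (P_pos hx j).le
  rw [natCast_mul_P n, natCast_mul_P u, ← sum_range_add_sum_Ico _ hcn, mul_add, mul_left_comm,
    mul_assoc x]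
  gcongr
  · exact sum_range_mysigma_mul_le (f := fun j => P j x) hP hC hcu h
  · exact sum_Ico_mysigma_mul_le hP hcn

end Recursion

def pTwoTable (n : ℕ) : ℕ :=
  [1, 2, 5, 10, 20, 36, 65, 110, 185, 300, 481, 752, 1165, 1770, 2665, 3956, 5822, 8470, 12230,
    17490, 24842, 35002, 49010, 68150, 94235, 129512, 177087, 240840, 326015, 439190, 589128,
    786814, 1046705, 1386930, 1831065, 2408658, 3157789, 4126070, 5374390, 6978730].getD n 0

lemma pTwoTable_recursion : ∀ n < 40,
    n * pTwoTable n = 2 * ∑ k ∈ range n, mysigma (k + 1) * pTwoTable (n - 1 - k) := by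
  decide +kernel

lemma P_two_eq_pTwoTable {n : ℕ} (hn : n < 40) : P n 2 = pTwoTable n := by
  induction n using Nat.strong_induction_on with
  | _ n ih =>
    rcases n.eq_zero_or_pos with rfl | hpos
    · simp [P, pTwoTable]
    have hsum : ∑ k ∈ range n, (mysigma (k + 1) : ℝ) * P (n - 1 - k) 2
        = ∑ k ∈ range n, (mysigma (k + 1) : ℝ) * pTwoTable (n - 1 - k) :=
      sum_congr rfl fun k hk => by rw [ih _ (by omega) (by omega)]
    have hrec : (n : ℝ) * pTwoTable n
        = 2 * ∑ k ∈ range n, (mysigma (k + 1) : ℝ) * pTwoTable (n - 1 - k) := by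
      exact_mod_cast pTwoTable_recursion n hn
    have := natCast_mul_P n 2
    rw [hsum, ← hrec] at this
    exact mul_left_cancel₀ (by positivity) this

lemma fifty_mul_sq_le_pTwoTable : ∀ m < 40, 20 ≤ m → 50 * m ^ 2 ≤ pTwoTable m := by
  decide +kernel

lemma pTwoTable_succ_le : ∀ u < 20, 4 ≤ u → 10 * pTwoTable (u + 1) ≤ 19 * pTwoTable u := by
  decide +kernel

lemma pTwoTable_add_le : ∀ u < 20, ∀ v < 20, 2 ≤ u → 2 ≤ v →
    5 * pTwoTable (u + v) ≤ 4 * pTwoTable u * pTwoTable v := by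
  decide +kernel

lemma P_one_two : P 1 2 = 2 := by
  norm_num [P_two_eq_pTwoTable, pTwoTable]

lemma P_two_two : P 2 2 = 5 := by
  norm_num [P_two_eq_pTwoTable, pTwoTable]

lemma sum_range_five_P_two : ∑ j ∈ range 5, P j 2 = 38 := by
  simp only [sum_range_succ, sum_range_zero]
  norm_num [P_two_eq_pTwoTable, pTwoTable]

lemma sum_range_natCast_add_one (h : ℕ) : ∑ k ∈ range h, ((k : ℝ) + 1) = h * (h + 1) / 2 := by
  induction h with
  | zero => simp
  | succ n ih => rw [sum_range_succ, ih]; push_cast; ring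

lemma fifty_mul_sq_le_P_two {m : ℕ} (hm : 20 ≤ m) : 50 * (m : ℝ) ^ 2 ≤ P m 2 := by
  induction m using Nat.strong_induction_on with
  | _ m ih =>
    rcases lt_or_ge m 40 with hm40 | hm40
    · rw [P_two_eq_pTwoTable hm40]
      exact_mod_cast fifty_mul_sq_le_pTwoTable m hm40 hm
    set h := m / 2
    set d := m - h
    have hterm : ∀ k ∈ range h, ((k : ℝ) + 1) * (50 * d ^ 2)
        ≤ (mysigma (k + 1) : ℝ) * P (m - 1 - k) 2 := by
      intro k hk
      rw [mem_range] at hk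
      have hσ : (k : ℝ) + 1 ≤ mysigma (k + 1) := by exact_mod_cast le_mysigma (k + 1)
      have hd : (d : ℝ) ≤ (m - 1 - k : ℕ) := by exact_mod_cast (by omega : d ≤ m - 1 - k)
      have hP : 50 * (d : ℝ) ^ 2 ≤ P (m - 1 - k) 2 :=
        calc 50 * (d : ℝ) ^ 2 ≤ 50 * ((m - 1 - k : ℕ) : ℝ) ^ 2 := by gcongr
          _ ≤ P (m - 1 - k) 2 := ih _ (by omega) (by omega)
      gcongr
    have hhead : (h : ℝ) * (h + 1) / 2 * (50 * d ^ 2)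
        ≤ ∑ k ∈ range m, (mysigma (k + 1) : ℝ) * P (m - 1 - k) 2 := by
      rw [← sum_range_natCast_add_one, sum_mul]
      exact (sum_le_sum hterm).trans <| sum_le_sum_of_subset_of_nonneg
        (range_subset_range.2 (by omega))
        fun k _ _ => mul_nonneg (Nat.cast_nonneg _) (P_pos two_pos _).le
    have hm2h : (m : ℝ) ≤ 2 * h + 1 := by exact_mod_cast (by omega : m ≤ 2 * h + 1)
    have hmd : (m : ℝ) ≤ 2 * d := by exact_mod_cast (by omega : m ≤ 2 * d)
    have h17 : (17 : ℝ) ≤ h := by exact_mod_cast (by omega : 17 ≤ h)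
    have hcube : (m : ℝ) * (50 * m ^ 2) ≤ (h : ℝ) * (h + 1) * (50 * d ^ 2) := by
      have h4m : 4 * (m : ℝ) ≤ h * (h + 1) := by nlinarith
      have hm2 : (m : ℝ) ^ 2 ≤ 4 * d ^ 2 := by nlinarith
      nlinarith
    have hrec := natCast_mul_P m 2
    have hm0 : (0 : ℝ) < m := by positivity
    refine le_of_mul_le_mul_left ?_ hm0
    linarith

lemma P_two_succ_le {u : ℕ} (hu : 4 ≤ u) : P (u + 1) 2 ≤ 19 / 10 * P u 2 := by
  induction u using Nat.strong_induction_on with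
  | _ u ih =>
    rcases lt_or_ge u 20 with hu20 | hu20
    · rw [P_two_eq_pTwoTable (n := u + 1) (by omega), P_two_eq_pTwoTable (n := u) (by omega)]
      have := pTwoTable_succ_le u hu20 hu
      have : (10 : ℝ) * pTwoTable (u + 1) ≤ 19 * pTwoTable u := by exact_mod_cast this
      linarith
    have hsplit := natCast_mul_P_le two_pos (by norm_num : (0 : ℝ) ≤ 19 / 10)
      (c := u - 4) (n := u + 1) (u := u) (by omega) (by omega) fun k hk => by
        rw [show u + 1 - 1 - k = u - 1 - k + 1 by omega]
        exact ih _ (by omega) (by omega)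
    rw [show u + 1 - (u - 4) = 5 by omega, sum_range_five_P_two] at hsplit
    have hgrowth := fifty_mul_sq_le_P_two hu20
    have hu' : (20 : ℝ) ≤ u := by exact_mod_cast hu20
    have hn : (0 : ℝ) < (u + 1 : ℕ) := by positivity
    refine le_of_mul_le_mul_left ?_ hn
    push_cast at hsplit ⊢
    nlinarith

lemma P_two_add_le_of_forall_lt {u v : ℕ} (hu : 20 ≤ u) (hv : 2 ≤ v) (hvu : v ≤ u)
    (ih : ∀ x, 2 ≤ x → x < u → P (x + v) 2 ≤ 4 / 5 * P x 2 * P v 2) :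
    P (u + v) 2 ≤ 4 / 5 * P u 2 * P v 2 := by
  have hPv := P_pos two_pos v
  have hsplit := natCast_mul_P_le two_pos (C := 4 / 5 * P v 2) (by positivity) (c := u - 2)
    (n := u + v) (u := u) (by omega) (by omega) fun k hk => by
      rw [show u + v - 1 - k = u - 1 - k + v by omega]
      calc _ ≤ 4 / 5 * P (u - 1 - k) 2 * P v 2 := ih _ (by omega) (by omega)
        _ = _ := by ring
  rw [show u + v - (u - 2) = v + 2 by omega] at hsplit
  have htail : 2 * ∑ j ∈ range (v + 2), P j 2 ≤ (v + 2) * (4 * P v 2) := by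
    have h2 : P (v + 2) 2 ≤ 4 * P v 2 := by
      have := ih 2 le_rfl (by omega)
      rw [add_comm, P_two_two] at this
      linarith
    calc 2 * ∑ j ∈ range (v + 2), P j 2 ≤ (v + 2 : ℕ) * P (v + 2) 2 := mul_sum_range_P_le two_pos _
      _ ≤ (v + 2) * (4 * P v 2) := by push_cast; gcongr
  have key : ((u + v : ℕ) : ℝ) ^ 2 * ((v + 2) * (4 * P v 2)) ≤ 4 / 5 * v * P u 2 * P v 2 := by
    have h1 : ((u + v : ℕ) : ℝ) ≤ 2 * u := by exact_mod_cast (by omega : u + v ≤ 2 * u)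
    have h2 : (v : ℝ) + 2 ≤ 2 * v := by exact_mod_cast (by omega : v + 2 ≤ 2 * v)
    calc ((u + v : ℕ) : ℝ) ^ 2 * ((v + 2) * (4 * P v 2))
        ≤ (2 * u) ^ 2 * ((2 * v) * (4 * P v 2)) := by gcongr
      _ = 16 / 25 * v * (50 * u ^ 2) * P v 2 := by ring
      _ ≤ 4 / 5 * v * (50 * u ^ 2) * P v 2 := by
        have : (0 : ℝ) ≤ v * (50 * u ^ 2) * P v 2 := by positivity
        linarith
      _ ≤ 4 / 5 * v * P u 2 * P v 2 := by gcongr; exact fifty_mul_sq_le_P_two hu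
  have hn : (0 : ℝ) < (u + v : ℕ) := by positivity
  refine le_of_mul_le_mul_left ?_ hn
  have := mul_le_mul_of_nonneg_left htail (sq_nonneg ((u + v : ℕ) : ℝ))
  push_cast at hsplit this key ⊢
  nlinarith

lemma P_two_add_le {u v : ℕ} (hu : 2 ≤ u) (hv : 2 ≤ v) : P (u + v) 2 ≤ 4 / 5 * P u 2 * P v 2 := by
  induction hn : u + v using Nat.strong_induction_on generalizing u v with
  | _ n ih =>
    subst hn
    wlog hvu : v ≤ u generalizing u v
    · rw [add_comm, mul_right_comm]
      exact this hv hu (fun m hm x y hx hy hxy => ih m (by omega) hx hy hxy) (by omega)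
    rcases lt_or_ge u 20 with hu20 | hu20
    · rw [P_two_eq_pTwoTable (n := u + v) (by omega), P_two_eq_pTwoTable (n := u) (by omega),
        P_two_eq_pTwoTable (n := v) (by omega)]
      have := pTwoTable_add_le u hu20 v (by omega) hu hv
      have : (5 : ℝ) * pTwoTable (u + v) ≤ 4 * pTwoTable u * pTwoTable v := by exact_mod_cast this
      linarith
    exact P_two_add_le_of_forall_lt hu20 hv hvu fun x hx hxu => ih _ (by omega) hx hv rfl

theorem darcais_BO_two (a b : ℕ) (ha : 0 < a) (hb : 0 < b) (hab : 5 ≤ a + b) :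
    P a 2 * P b 2 > P (a + b) 2 := by
  wlog hba : b ≤ a generalizing a b
  · rw [add_comm, mul_comm]
    exact this b a hb ha (by omega) (by omega)
  have hpos := P_pos two_pos
  obtain rfl | hb2 : b = 1 ∨ 2 ≤ b := by omega
  · calc P (a + 1) 2 ≤ 19 / 10 * P a 2 := P_two_succ_le (by omega)
      _ < P a 2 * P 1 2 := by rw [P_one_two]; linarith [hpos a]
  · calc P (a + b) 2 ≤ 4 / 5 * P a 2 * P b 2 := P_two_add_le (by omega) hb2
      _ < P a 2 * P b 2 := by nlinarith [mul_pos (hpos a) (hpos b)]
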